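/- For every integer n, every natural number k, and every positive integer N, the adjustment coefficients satisfy r_k(N) = φ_{n,k}(N + A_n) + A_n · (3^{β_k(N)} / 2^k - 1) as rational numbers, and moreover α_{n,k}(N + A_n) = β_k(N). -/
import Mathlib


def T (N : ℤ) : ℤ := if Even N then N / 2 else (3 * N + 1) / 2

def F (n : ℤ) (P : ℤ) : ℤ := if Even P then (3 * P - 2 * n) / 2 else (P + 2 * n + 1) / 2

def A (n : ℤ) : ℤ := 2 * n + 1

def beta (k : ℕ) (N : ℤ) : ℕ := ((Finset.range k).filter (fun j => Odd (T^[j] N))).card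

def alpha (n : ℤ) (k : ℕ) (P : ℤ) : ℕ :=
  ((Finset.range k).filter (fun j => Even ((F n)^[j] P))).card

def phi (n : ℤ) (k : ℕ) (P : ℤ) : ℚ :=
  ((F n)^[k] P : ℚ) - ((3 : ℚ) ^ alpha n k P / 2 ^ k) * (P : ℚ)

def r (k : ℕ) (N : ℤ) : ℚ :=
  (T^[k] N : ℚ) - ((3 : ℚ) ^ beta k N / 2 ^ k) * (N : ℚ)


lemma F_step (n N : ℤ) : F n (N + A n) = T N + A n := by
  simp only [F, T, A, Int.even_iff]
  split_ifs <;> omega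

lemma F_iter (n : ℤ) (k : ℕ) (N : ℤ) : (F n)^[k] (N + A n) = T^[k] N + A n := by
  induction k with
  | zero => simp
  | succ k ih =>
    rw [Function.iterate_succ_apply', Function.iterate_succ_apply', ih, F_step]

lemma alpha_beta (n : ℤ) (k : ℕ) (N : ℤ) : alpha n k (N + A n) = beta k N := by
  unfold alpha beta
  congr 1
  apply Finset.filter_congr
  intro j _
  rw [F_iter]
  simp only [A, Int.even_iff, Int.odd_iff, eq_iff_iff]
  omega

theorem stmt_14 (n : ℤ) (k : ℕ) (N : ℤ) (hN : 0 < N) :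
    r k N = phi n k (N + A n) + (A n : ℚ) * ((3 : ℚ) ^ beta k N / 2 ^ k - 1) ∧
    alpha n k (N + A n) = beta k N := by
  refine ⟨?_, alpha_beta n k N⟩
  unfold r phi
  rw [alpha_beta, F_iter]
  push_cast
  ring
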